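/- Let K be a nonempty closed convex subset of a uniformly convex real Banach space E with a partial order ≤ induced by a closed convex cone P, and let T : K → K be a monotone α-nonexpansive mapping for some α < 1. If there exists x₀ ∈ K with Tx₀ ≤ x₀ such that the orbit O(x₀) = {Tⁿx₀ : n = 0, 1, 2, ...} is bounded in norm, then T has a fixed point z ∈ K with z ≤ x₀. -/

import Mathlib

open Filter Topology

/-- A closed convex cone in a real normed space: nonempty, closed, not `{0}`,
pointed (`P ∩ (−P) = {0}`), and closed under nonnegative linear combinations. -/
def IsClosedConvexCone {E : Type*} [NormedAddCommGroup E] [NormedSpace ℝ E]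
    (P : Set E) : Prop :=
  P.Nonempty ∧ IsClosed P ∧ P ≠ {0} ∧ P ∩ (-P) = {0} ∧
    ∀ x ∈ P, ∀ y ∈ P, ∀ a b : ℝ, 0 ≤ a → 0 ≤ b → a • x + b • y ∈ P

/-- Weak convergence of a sequence: `f (x n) → f l` for every continuous
linear functional `f`. -/
def WeakConv {E : Type*} [NormedAddCommGroup E] [NormedSpace ℝ E]
    (x : ℕ → E) (l : E) : Prop :=
  ∀ f : E →L[ℝ] ℝ, Tendsto (fun n => f (x n)) atTop (𝓝 (f l))

/-- `T` is monotone (w.r.t. the order `x ≤ y ↔ y - x ∈ P`) and α-nonexpansive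
on `K`. -/
def MonotoneAlphaNonexpansive {E : Type*} [NormedAddCommGroup E] [NormedSpace ℝ E]
    (P K : Set E) (T : E → E) (α : ℝ) : Prop :=
  (∀ x ∈ K, ∀ y ∈ K, y - x ∈ P → T y - T x ∈ P) ∧
    ∀ x ∈ K, ∀ y ∈ K, y - x ∈ P →
      ‖T x - T y‖ ^ 2 ≤ α * ‖T x - y‖ ^ 2 + α * ‖T y - x‖ ^ 2
        + (1 - 2 * α) * ‖x - y‖ ^ 2

/-!
The orbit `xₙ = Tⁿ x₀` is decreasing, so the set `C` of points of `K` lying below every `xₙ` is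
closed, convex and `T`-invariant; it is nonempty because nested closed convex sets meeting a fixed
ball have a common point in a uniformly convex Banach space. Let `Φ y = LIM ‖xₙ - y‖²` for a
Banach limit `LIM`. Then `Φ` is convex, continuous and coercive, so it has a minimizer `z` on `C`.
Applying `LIM` to the α-nonexpansive inequality for `z ≤ xₙ` and using shift invariance gives
`(1 - α) Φ (T z) ≤ (1 - α) Φ z`, so `T z` is a second minimizer; since uniform convexity makes `Φ`
strictly midpoint convex, `T z = z`.
-/

open Finset

noncomputable def cesaroMean (u : ℕ → ℝ) (n : ℕ) : ℝ := (∑ i ∈ range (n + 1), u i) / (n + 1)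

section CesaroMean

variable {u v : ℕ → ℝ}

lemma cesaroMean_add (n : ℕ) :
    cesaroMean (fun i => u i + v i) n = cesaroMean u n + cesaroMean v n := by
  simp only [cesaroMean, sum_add_distrib, add_div]

lemma cesaroMean_const_mul (c : ℝ) (n : ℕ) :
    cesaroMean (fun i => c * u i) n = c * cesaroMean u n := by
  simp only [cesaroMean, ← mul_sum, mul_div_assoc]

lemma cesaroMean_const (c : ℝ) (n : ℕ) : cesaroMean (fun _ => c) n = c := by
  simp only [cesaroMean, sum_const, card_range, nsmul_eq_mul]
  field_simp
  push_cast
  ring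

lemma cesaroMean_mono (h : ∀ i, u i ≤ v i) (n : ℕ) : cesaroMean u n ≤ cesaroMean v n := by
  unfold cesaroMean
  gcongr with i
  exact h i

lemma abs_cesaroMean_le {B : ℝ} (hu : ∀ i, |u i| ≤ B) (n : ℕ) : |cesaroMean u n| ≤ B := by
  have hlow := cesaroMean_mono (fun i => (abs_le.1 (hu i)).1) n
  have hupp := cesaroMean_mono (fun i => (abs_le.1 (hu i)).2) n
  rw [cesaroMean_const] at hlow hupp
  exact abs_le.2 ⟨hlow, hupp⟩

lemma cesaroMean_comp_succ (n : ℕ) :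
    cesaroMean (fun i => u (i + 1)) n = cesaroMean u n + (u (n + 1) - u 0) / (n + 1) := by
  have h := sum_range_succ' u (n + 1)
  rw [sum_range_succ] at h
  simp only [cesaroMean, ← add_div]
  congr 1
  linarith

end CesaroMean

/-- `l` is the Banach limit of `u`. Taking Cesàro means before the ultrafilter limit is what
makes it shift invariant (`HasBanachLim.comp_succ`). -/
def HasBanachLim (u : ℕ → ℝ) (l : ℝ) : Prop :=
  Tendsto (cesaroMean u) (Ultrafilter.of (atTop : Filter ℕ)) (𝓝 l)

noncomputable def banachLim (u : ℕ → ℝ) : ℝ :=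
  limUnder (Ultrafilter.of (atTop : Filter ℕ)) (cesaroMean u)

namespace HasBanachLim

variable {u v : ℕ → ℝ} {a b : ℝ}

lemma add (hu : HasBanachLim u a) (hv : HasBanachLim v b) :
    HasBanachLim (fun n => u n + v n) (a + b) :=
  (Tendsto.add hu hv).congr fun n => (cesaroMean_add n).symm

lemma const_mul (hu : HasBanachLim u a) (c : ℝ) : HasBanachLim (fun n => c * u n) (c * a) :=
  (Tendsto.const_mul c hu).congr fun n => (cesaroMean_const_mul c n).symm

lemma le (hu : HasBanachLim u a) (hv : HasBanachLim v b) (h : ∀ n, u n ≤ v n) : a ≤ b :=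
  le_of_tendsto_of_tendsto' hu hv (cesaroMean_mono h)

lemma comp_succ {B : ℝ} (hB : ∀ n, |u n| ≤ B) (hu : HasBanachLim u a) :
    HasBanachLim (fun n => u (n + 1)) a := by
  have hdiff : Tendsto (fun n : ℕ => (u (n + 1) - u 0) / (n + 1)) atTop (𝓝 0) := by
    have hbound : Tendsto (fun n : ℕ => 2 * B / ((n : ℝ) + 1)) atTop (𝓝 0) := by
      simpa only [Function.comp_def, Nat.cast_succ] using
        (tendsto_const_div_atTop_nhds_zero_nat (2 * B)).comp (tendsto_add_atTop_nat 1)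
    refine squeeze_zero_norm (fun n => ?_) hbound
    rw [Real.norm_eq_abs, abs_div, abs_of_pos (by positivity : (0 : ℝ) < n + 1)]
    gcongr
    exact (abs_sub _ _).trans (by linarith [hB (n + 1), hB 0])
  have h := Tendsto.add hu (hdiff.mono_left (Ultrafilter.of_le atTop))
  rw [add_zero] at h
  exact h.congr fun n => (cesaroMean_comp_succ n).symm

end HasBanachLim

lemma hasBanachLim_const (c : ℝ) : HasBanachLim (fun _ => c) c :=
  tendsto_const_nhds.congr fun n => (cesaroMean_const c n).symm

lemma hasBanachLim_banachLim {u : ℕ → ℝ} {B : ℝ} (hu : ∀ n, |u n| ≤ B) :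
    HasBanachLim u (banachLim u) := by
  obtain ⟨l, -, hl⟩ := (isCompact_Icc (a := -B) (b := B)).ultrafilter_le_nhds
    ((Ultrafilter.of atTop).map (cesaroMean u))
    (le_principal_iff.2 (mem_map.2 (univ_mem' fun n => abs_le.1 (abs_cesaroMean_le hu n))))
  have hl : HasBanachLim u l := hl
  rwa [banachLim, hl.limUnder_eq]

section UniformConvex

variable {E : Type*} [NormedAddCommGroup E] [NormedSpace ℝ E] [UniformConvexSpace E]

theorem exists_forall_norm_midpoint_sq_le_sub {ε : ℝ} (hε : 0 < ε) (R : ℝ) :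
    ∃ η, 0 < η ∧ ∀ ⦃u v : E⦄, ‖u‖ ≤ R → ‖v‖ ≤ R → ε ≤ ‖u - v‖ →
      ‖midpoint ℝ u v‖ ^ 2 ≤ (‖u‖ ^ 2 + ‖v‖ ^ 2) / 2 - η := by
  obtain hR | hR := le_or_gt R 0
  · refine ⟨1, one_pos, fun u v hu hv huv => ?_⟩
    linarith [huv.trans (norm_sub_le u v)]
  obtain ⟨δ, hδ, huc⟩ := exists_forall_closed_ball_dist_add_le_two_sub E (div_pos hε hR)
  set δ' := min δ 1
  have hδ' : 0 < δ' := lt_min hδ one_pos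
  refine ⟨(δ' * ε / 16) ^ 2, by positivity, ?_⟩
  suffices key : ∀ ⦃u v : E⦄, ‖v‖ ≤ ‖u‖ → ‖u‖ ≤ R → ε ≤ ‖u - v‖ →
      ‖u + v‖ ^ 2 / 4 ≤ (‖u‖ ^ 2 + ‖v‖ ^ 2) / 2 - (δ' * ε / 16) ^ 2 by
    intro u v hu hv huv
    have hmid : ‖midpoint ℝ u v‖ ^ 2 = ‖u + v‖ ^ 2 / 4 := by
      rw [midpoint_eq_smul_add, norm_smul]
      norm_num
      ring
    rw [hmid]
    rcases le_total ‖v‖ ‖u‖ with h | h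
    · exact key h hu huv
    · rw [add_comm (‖u‖ ^ 2), add_comm u]
      exact key h hv (by rwa [norm_sub_rev])
  intro u v hvu hu huv
  have hε2 : ε ≤ 2 * ‖u‖ := huv.trans ((norm_sub_le u v).trans (by linarith))
  have hu0 : 0 < ‖u‖ := by linarith
  have hscaled : ‖u + v‖ ≤ (2 - δ') * ‖u‖ := by
    have hnorm : ∀ w : E, ‖‖u‖⁻¹ • w‖ = ‖u‖⁻¹ * ‖w‖ := fun w =>
      norm_smul_of_nonneg (inv_nonneg.2 hu0.le) w
    have h := @huc (‖u‖⁻¹ • u) (by rw [hnorm, inv_mul_cancel₀ hu0.ne'])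
      (‖u‖⁻¹ • v) (by rw [hnorm, inv_mul_le_iff₀ hu0, mul_one]; exact hvu)
      (by
        rw [← smul_sub, hnorm, le_inv_mul_iff₀ hu0]
        calc ‖u‖ * (ε / R) ≤ R * (ε / R) := by gcongr
          _ = ε := by field_simp
          _ ≤ ‖u - v‖ := huv)
    rw [← smul_add, hnorm, inv_mul_le_iff₀ hu0] at h
    nlinarith [min_le_left δ 1]
  have htri : ‖u + v‖ ≤ ‖u‖ + ‖v‖ := norm_add_le u v
  have hδ'1 : δ' ≤ 1 := min_le_right δ 1
  have hs := norm_nonneg (u + v)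
  -- either the norms are far apart, or the midpoint is uniformly shorter than `‖u‖`
  rcases le_or_gt (δ' * ε / 8) (‖u‖ - ‖v‖) with hfar | hnear
  · nlinarith [mul_le_mul htri htri hs (by linarith),
      mul_le_mul hfar hfar (by positivity) (by linarith)]
  · nlinarith [mul_le_mul hscaled hscaled hs (by nlinarith),
      mul_nonneg (mul_nonneg hu0.le hu0.le) (mul_nonneg hδ'.le (sub_nonneg.2 hδ'1)),
      mul_le_mul_of_nonneg_left hnear.le hu0.le,
      mul_nonneg (mul_nonneg hu0.le hδ'.le) (by linarith : 0 ≤ 2 * ‖u‖ - ε),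
      mul_nonneg (mul_nonneg hε.le hδ'.le) (by nlinarith : 0 ≤ 2 * ‖u‖ - δ' * ε / 32),
      sq_nonneg (‖u‖ - ‖v‖)]

end UniformConvex

section AsymptoticDistSq

variable {E : Type*} [NormedAddCommGroup E] {x : ℕ → E} {M : ℝ}

noncomputable def asymptoticDistSq (x : ℕ → E) (y : E) : ℝ := banachLim fun n => ‖x n - y‖ ^ 2

lemma abs_norm_sub_sq_le (hx : ∀ n, ‖x n‖ ≤ M) (y : E) (n : ℕ) :
    |‖x n - y‖ ^ 2| ≤ (M + ‖y‖) ^ 2 := by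
  rw [abs_of_nonneg (by positivity)]
  exact pow_le_pow_left₀ (norm_nonneg _) ((norm_sub_le _ _).trans (by linarith [hx n])) 2

lemma hasBanachLim_asymptoticDistSq (hx : ∀ n, ‖x n‖ ≤ M) (y : E) :
    HasBanachLim (fun n => ‖x n - y‖ ^ 2) (asymptoticDistSq x y) :=
  hasBanachLim_banachLim (abs_norm_sub_sq_le hx y)

lemma asymptoticDistSq_nonneg (hx : ∀ n, ‖x n‖ ≤ M) (y : E) : 0 ≤ asymptoticDistSq x y :=
  (hasBanachLim_const 0).le (hasBanachLim_asymptoticDistSq hx y) fun _ => by positivity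

lemma asymptoticDistSq_le_add (hx : ∀ n, ‖x n‖ ≤ M) (y y' : E) :
    asymptoticDistSq x y ≤ asymptoticDistSq x y' + (2 * M + ‖y‖ + ‖y'‖) * ‖y - y'‖ := by
  refine (hasBanachLim_asymptoticDistSq hx y).le
    ((hasBanachLim_asymptoticDistSq hx y').add (hasBanachLim_const _)) fun n => ?_
  have hdiff : ‖x n - y‖ - ‖x n - y'‖ ≤ ‖y - y'‖ := by
    simpa only [sub_sub_sub_cancel_left, norm_sub_rev y'] using
      norm_sub_norm_le (x n - y) (x n - y')
  have hsum : ‖x n - y‖ + ‖x n - y'‖ ≤ 2 * M + ‖y‖ + ‖y'‖ := by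
    linarith [norm_sub_le (x n) y, norm_sub_le (x n) y', hx n]
  nlinarith [mul_le_mul_of_nonneg_right hdiff (by positivity : 0 ≤ ‖x n - y‖ + ‖x n - y'‖),
    mul_le_mul_of_nonneg_left hsum (norm_nonneg (y - y'))]

lemma continuous_asymptoticDistSq (hx : ∀ n, ‖x n‖ ≤ M) : Continuous (asymptoticDistSq x) := by
  refine continuous_iff_continuousAt.2 fun y₀ =>
    continuousAt_of_locally_lipschitz one_pos (2 * M + 2 * ‖y₀‖ + 1) fun y hy => ?_
  rw [dist_eq_norm] at hy
  rw [Real.dist_eq, abs_sub_le_iff, dist_eq_norm]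
  have hy' : ‖y‖ ≤ ‖y₀‖ + 1 := by linarith [norm_le_norm_add_norm_sub' y y₀]
  have hd := norm_nonneg (y - y₀)
  have h₁ := asymptoticDistSq_le_add hx y y₀
  have h₂ := asymptoticDistSq_le_add hx y₀ y
  rw [norm_sub_rev y₀ y] at h₂
  constructor <;> nlinarith

lemma norm_le_add_sqrt_asymptoticDistSq (hx : ∀ n, ‖x n‖ ≤ M) (y : E) :
    ‖y‖ ≤ M + √(asymptoticDistSq x y) := by
  rcases le_total ‖y‖ M with hyM | hMy
  · linarith [Real.sqrt_nonneg (asymptoticDistSq x y)]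
  have hsq : (‖y‖ - M) ^ 2 ≤ asymptoticDistSq x y := by
    refine (hasBanachLim_const _).le (hasBanachLim_asymptoticDistSq hx y) fun n => ?_
    have h : ‖y‖ - M ≤ ‖x n - y‖ := by
      linarith [norm_sub_norm_le y (x n), hx n, norm_sub_rev y (x n)]
    exact pow_le_pow_left₀ (by linarith) h 2
  linarith [Real.le_sqrt_of_sq_le hsq]

lemma asymptoticDistSq_le_of_forall_le {α : ℝ} (hx : ∀ n, ‖x n‖ ≤ M) (hα : α < 1) {z w : E}
    (h : ∀ n, ‖x (n + 1) - w‖ ^ 2 ≤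
      α * ‖x n - w‖ ^ 2 + α * ‖x (n + 1) - z‖ ^ 2 + (1 - 2 * α) * ‖x n - z‖ ^ 2) :
    asymptoticDistSq x w ≤ asymptoticDistSq x z := by
  have hz := hasBanachLim_asymptoticDistSq hx z
  have hw := hasBanachLim_asymptoticDistSq hx w
  have key := (hw.comp_succ (abs_norm_sub_sq_le hx w)).le
    (((hw.const_mul α).add ((hz.comp_succ (abs_norm_sub_sq_le hx z)).const_mul α)).add
      (hz.const_mul (1 - 2 * α))) h
  nlinarith

variable [NormedSpace ℝ E]

lemma convexOn_asymptoticDistSq (hx : ∀ n, ‖x n‖ ≤ M) :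
    ConvexOn ℝ Set.univ (asymptoticDistSq x) := by
  refine ⟨convex_univ, fun y _ y' _ a b ha hb hab => ?_⟩
  refine (hasBanachLim_asymptoticDistSq hx _).le
    (((hasBanachLim_asymptoticDistSq hx y).const_mul a).add
      ((hasBanachLim_asymptoticDistSq hx y').const_mul b)) fun n => ?_
  have h := ((convexOn_univ_dist (x n)).pow (fun _ _ => dist_nonneg) 2).2
    (Set.mem_univ y) (Set.mem_univ y') ha hb hab
  simpa only [Pi.pow_apply, dist_eq_norm, norm_sub_rev _ (x n), smul_eq_mul] using h

lemma asymptoticDistSq_midpoint_lt [UniformConvexSpace E] (hx : ∀ n, ‖x n‖ ≤ M) {z w : E}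
    (hzw : z ≠ w) :
    asymptoticDistSq x (midpoint ℝ z w) < (asymptoticDistSq x z + asymptoticDistSq x w) / 2 := by
  obtain ⟨η, hη, huc⟩ :=
    exists_forall_norm_midpoint_sq_le_sub (E := E) (norm_sub_pos_iff.2 hzw.symm) (M + ‖z‖ + ‖w‖)
  have hz := hasBanachLim_asymptoticDistSq hx z
  have hw := hasBanachLim_asymptoticDistSq hx w
  have key := (hasBanachLim_asymptoticDistSq hx (midpoint ℝ z w)).le
    (((hz.add hw).const_mul (1 / 2)).add (hasBanachLim_const (-η))) fun n => by
      have hmid : x n - midpoint ℝ z w = midpoint ℝ (x n - z) (x n - w) := by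
        simp only [midpoint_eq_smul_add, invOf_eq_inv]
        module
      have h := huc (u := x n - z) (v := x n - w)
        (by linarith [norm_sub_le (x n) z, hx n, norm_nonneg w])
        (by linarith [norm_sub_le (x n) w, hx n, norm_nonneg z])
        (by rw [sub_sub_sub_cancel_left])
      rw [hmid]
      linarith
  linarith

end AsymptoticDistSq

section Minimization

variable {E : Type*} [NormedAddCommGroup E] [NormedSpace ℝ E] [UniformConvexSpace E]
  [CompleteSpace E]

/-- Points of almost minimal norm in `C n` form a Cauchy sequence, by uniform convexity applied
to the midpoints, which stay in `C (min m n)`. -/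
theorem nonempty_iInter_of_antitone_convex {C : ℕ → Set E} (hC : Antitone C)
    (hcl : ∀ n, IsClosed (C n)) (hcv : ∀ n, Convex ℝ (C n)) {R : ℝ}
    (hR : ∀ n, ∃ y ∈ C n, ‖y‖ ≤ R) : (⋂ n, C n).Nonempty := by
  have hne : ∀ n, (C n).Nonempty := fun n => (hR n).imp fun y hy => hy.1
  set d : ℕ → ℝ := fun n => Metric.infDist 0 (C n)
  have hdR : ∀ n, d n ≤ R := fun n => by
    obtain ⟨y, hy, hyR⟩ := hR n
    exact (Metric.infDist_le_dist_of_mem hy).trans (by rwa [dist_zero_left])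
  have hdmono : Monotone d := fun m n h => Metric.infDist_le_infDist_of_subset (hC h) (hne n)
  have hbdd : BddAbove (Set.range d) := ⟨R, Set.forall_mem_range.2 hdR⟩
  set L := ⨆ n, d n
  have hdL : Tendsto d atTop (𝓝 L) := tendsto_atTop_ciSup hdmono hbdd
  have hp : ∀ n, ∃ y ∈ C n, ‖y‖ < d n + 1 / (n + 1) := fun n => by
    simpa only [dist_zero_left] using
      (Metric.infDist_lt_iff (hne n)).1 (lt_add_of_pos_right (d n) Nat.one_div_pos_of_nat)
  choose p hpC hpd using hp
  have hdp : ∀ n, d n ≤ ‖p n‖ := fun n => by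
    simpa only [dist_zero_left] using Metric.infDist_le_dist_of_mem (x := 0) (hpC n)
  have hpR : ∀ n, ‖p n‖ ≤ R + 1 := fun n => by
    have : 1 / ((n : ℝ) + 1) ≤ 1 := by
      rw [div_le_one (by positivity)]
      linarith [n.cast_nonneg (α := ℝ)]
    linarith [hpd n, hdR n]
  have hpL : Tendsto (fun n => ‖p n‖) atTop (𝓝 L) := by
    refine tendsto_of_tendsto_of_tendsto_of_le_of_le hdL ?_ hdp fun n => (hpd n).le
    simpa using hdL.add tendsto_one_div_add_atTop_nhds_zero_nat
  have hcauchy : CauchySeq p := by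
    refine Metric.cauchySeq_iff.2 fun ε hε => ?_
    obtain ⟨η, hη, huc⟩ := exists_forall_norm_midpoint_sq_le_sub (E := E) hε (R + 1)
    obtain ⟨N, hN⟩ := eventually_atTop.1 <|
      ((hpL.pow 2).eventually (gt_mem_nhds (lt_add_of_pos_right (L ^ 2) (half_pos hη)))).and
        ((hdL.pow 2).eventually (lt_mem_nhds (sub_lt_self (L ^ 2) (half_pos hη))))
    refine ⟨N, fun m hm n hn => ?_⟩
    by_contra! hmn
    rw [dist_eq_norm] at hmn
    have hmid : midpoint ℝ (p m) (p n) ∈ C (min m n) :=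
      (hcv _).midpoint_mem (hC (min_le_left m n) (hpC m)) (hC (min_le_right m n) (hpC n))
    have hdk : d (min m n) ^ 2 ≤ ‖midpoint ℝ (p m) (p n)‖ ^ 2 := by
      refine pow_le_pow_left₀ Metric.infDist_nonneg ?_ 2
      simpa only [dist_zero_left] using Metric.infDist_le_dist_of_mem (x := 0) hmid
    linarith [huc (hpR m) (hpR n) hmn, (hN m hm).1, (hN n hn).1, (hN _ (le_min hm hn)).2]
  obtain ⟨q, hq⟩ := cauchySeq_tendsto_of_complete hcauchy
  exact ⟨q, Set.mem_iInter.2 fun n => (hcl n).mem_of_tendsto hq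
    (eventually_atTop.2 ⟨n, fun m hm => hC hm (hpC m)⟩)⟩

theorem ConvexOn.exists_isMinOn_of_isBounded_sublevel {s : Set E} {f : E → ℝ}
    (hf : ConvexOn ℝ s f) (hlsc : LowerSemicontinuous f) (hs : IsClosed s) (hne : s.Nonempty)
    (hbdd : BddBelow (f '' s)) (hcoer : ∀ c, Bornology.IsBounded {y ∈ s | f y ≤ c}) :
    ∃ z ∈ s, IsMinOn f s z := by
  set m := sInf (f '' s)
  obtain ⟨R, hR⟩ := (hcoer (m + 1)).exists_norm_le
  set D : ℕ → Set E := fun k => {y ∈ s | f y ≤ m + 1 / (k + 1)}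
  have hD : Antitone D := fun k l hkl y hy => ⟨hy.1, hy.2.trans (by gcongr)⟩
  have hDR : ∀ k, ∃ y ∈ D k, ‖y‖ ≤ R := fun k => by
    obtain ⟨_, ⟨y, hy, rfl⟩, hym⟩ := exists_lt_of_csInf_lt (hne.image f)
      (lt_add_of_pos_right m (Nat.one_div_pos_of_nat (n := k)))
    have hk : 1 / ((k : ℝ) + 1) ≤ 1 := by
      rw [div_le_one (by positivity)]
      linarith [k.cast_nonneg (α := ℝ)]
    exact ⟨y, ⟨hy, hym.le⟩, hR y ⟨hy, by linarith⟩⟩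
  obtain ⟨z, hz⟩ := nonempty_iInter_of_antitone_convex hD
    (fun k => hs.inter (hlsc.isClosed_preimage _)) (fun k => hf.convex_le _) hDR
  rw [Set.mem_iInter] at hz
  refine ⟨z, (hz 0).1, fun y hy => ?_⟩
  refine (le_of_forall_pos_lt_add fun ε hε => ?_).trans (csInf_le hbdd (Set.mem_image_of_mem f hy))
  obtain ⟨k, hk⟩ := exists_nat_one_div_lt hε
  linarith [(hz k).2]

end Minimization

namespace IsClosedConvexCone

variable {E : Type*} [NormedAddCommGroup E] [NormedSpace ℝ E] {P : Set E}

lemma zero_mem (hP : IsClosedConvexCone P) : (0 : E) ∈ P := by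
  obtain ⟨u, hu⟩ := hP.1
  simpa using hP.2.2.2.2 u hu u hu 0 0 le_rfl le_rfl

lemma add_mem (hP : IsClosedConvexCone P) {u v : E} (hu : u ∈ P) (hv : v ∈ P) : u + v ∈ P := by
  simpa using hP.2.2.2.2 u hu v hv 1 1 zero_le_one zero_le_one

lemma sub_mem_trans (hP : IsClosedConvexCone P) {a b c : E} (hab : a - b ∈ P) (hbc : b - c ∈ P) :
    a - c ∈ P := by
  simpa using hP.add_mem hab hbc

lemma isClosed_setOf_sub_mem (hP : IsClosedConvexCone P) (a : E) : IsClosed {y | a - y ∈ P} :=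
  hP.2.1.preimage (continuous_const.sub continuous_id)

lemma convex_setOf_sub_mem (hP : IsClosedConvexCone P) (a : E) : Convex ℝ {y | a - y ∈ P} := by
  intro y hy y' hy' s t hs ht hst
  have h : a - (s • y + t • y') = s • (a - y) + t • (a - y') := by
    linear_combination (norm := module) -(hst • a)
  change a - (s • y + t • y') ∈ P
  rw [h]
  exact hP.2.2.2.2 _ hy _ hy' s t hs ht

lemma iterate_sub_iterate_mem (hP : IsClosedConvexCone P) {K : Set E} {T : E → E}
    (hmono : ∀ x ∈ K, ∀ y ∈ K, y - x ∈ P → T y - T x ∈ P) (hTK : Set.MapsTo T K K) {x₀ : E}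
    (hx₀ : x₀ ∈ K) (hdec : x₀ - T x₀ ∈ P) ⦃m n : ℕ⦄ (hmn : m ≤ n) :
    T^[m] x₀ - T^[n] x₀ ∈ P := by
  have hstep : ∀ k, T^[k] x₀ - T^[k + 1] x₀ ∈ P := by
    intro k
    induction k with
    | zero => exact hdec
    | succ k ih =>
      simpa only [Function.iterate_succ_apply'] using
        hmono _ (hTK.iterate (k + 1) hx₀) _ (hTK.iterate k hx₀) ih
  induction n, hmn using Nat.le_induction with
  | base => simpa using hP.zero_mem
  | succ n _ ih => exact hP.sub_mem_trans ih (hstep n)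

end IsClosedConvexCone

theorem pazy_fixed_point_decreasing_general
    {E : Type*} [NormedAddCommGroup E] [NormedSpace ℝ E]
    [UniformConvexSpace E] [CompleteSpace E]
    (P : Set E) (hP : IsClosedConvexCone P)
    (K : Set E) (hKcl : IsClosed K) (hKco : Convex ℝ K)
    (T : E → E) (hTK : ∀ x ∈ K, T x ∈ K)
    (α : ℝ) (hα : α < 1)
    (hT : MonotoneAlphaNonexpansive P K T α)
    (x₀ : E) (hx₀ : x₀ ∈ K) (hdec : x₀ - T x₀ ∈ P)
    (hbdd : ∃ M : ℝ, ∀ n : ℕ, ‖T^[n] x₀‖ ≤ M) :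
    ∃ z ∈ K, T z = z ∧ x₀ - z ∈ P := by
  obtain ⟨M, hM⟩ := hbdd
  have hxK : ∀ n, T^[n] x₀ ∈ K := fun n => Set.MapsTo.iterate hTK n hx₀
  have hanti := hP.iterate_sub_iterate_mem hT.1 hTK hx₀ hdec
  set F : ℕ → Set E := fun n => {y ∈ K | T^[n] x₀ - y ∈ P}
  have hFcl : ∀ n, IsClosed (F n) := fun n => hKcl.inter (hP.isClosed_setOf_sub_mem _)
  have hFcv : ∀ n, Convex ℝ (F n) := fun n => hKco.inter (hP.convex_setOf_sub_mem _)
  have hCne : (⋂ n, F n).Nonempty :=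
    nonempty_iInter_of_antitone_convex
      (fun m n hmn y hy => ⟨hy.1, hP.sub_mem_trans (hanti hmn) hy.2⟩) hFcl hFcv
      fun n => ⟨T^[n] x₀, ⟨hxK n, by simpa using hP.zero_mem⟩, hM n⟩
  have hCcv : Convex ℝ (⋂ n, F n) := convex_iInter hFcv
  have hΦ := (convexOn_asymptoticDistSq hM).subset (Set.subset_univ _) hCcv
  obtain ⟨z, hzC, hzmin⟩ := hΦ.exists_isMinOn_of_isBounded_sublevel
      (continuous_asymptoticDistSq hM).lowerSemicontinuous (isClosed_iInter hFcl) hCne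
      ⟨0, Set.forall_mem_image.2 fun y _ => asymptoticDistSq_nonneg hM y⟩
      fun c => isBounded_iff_forall_norm_le.2 ⟨M + √c, fun y hy =>
        (norm_le_add_sqrt_asymptoticDistSq hM y).trans (by gcongr; exact hy.2)⟩
  rw [Set.mem_iInter] at hzC
  have hzK : z ∈ K := (hzC 0).1
  have hTzC : T z ∈ ⋂ n, F n := Set.mem_iInter.2 fun n =>
    ⟨hTK z hzK, hP.sub_mem_trans (hanti n.le_succ)
      (by simpa only [Function.iterate_succ_apply'] using hT.1 z hzK _ (hxK n) (hzC n).2)⟩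
  have hTz : asymptoticDistSq (T^[·] x₀) (T z) ≤ asymptoticDistSq (T^[·] x₀) z :=
    asymptoticDistSq_le_of_forall_le hM hα fun n => by
      have h := hT.2 z hzK _ (hxK n) (hzC n).2
      rwa [← Function.iterate_succ_apply' T n x₀, norm_sub_rev (T z), norm_sub_rev (T z),
        norm_sub_rev z] at h
  refine ⟨z, hzK, by_contra fun hne => ?_, (hzC 0).2⟩
  linarith [asymptoticDistSq_midpoint_lt hM hne, isMinOn_iff.1 hzmin _ hTzC,
    isMinOn_iff.1 hzmin _ (hCcv.midpoint_mem hTzC (Set.mem_iInter.2 hzC))]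

/-- Pazy-type fixed point theorem: if `T x₀ ≤ x₀` and the orbit of `x₀` is
norm-bounded, then `T` has a fixed point `z` with `z ≤ x₀`. -/
theorem pazy_fixed_point_decreasing
    {E : Type*} [NormedAddCommGroup E] [NormedSpace ℝ E]
    [UniformConvexSpace E] [CompleteSpace E]
    (P : Set E) (hP : IsClosedConvexCone P)
    (K : Set E) (hKne : K.Nonempty) (hKcl : IsClosed K) (hKco : Convex ℝ K)
    (T : E → E) (hTK : ∀ x ∈ K, T x ∈ K)
    (α : ℝ) (hα : α < 1)
    (hT : MonotoneAlphaNonexpansive P K T α)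
    (x₀ : E) (hx₀ : x₀ ∈ K) (hdec : x₀ - T x₀ ∈ P)
    (hbdd : ∃ M : ℝ, ∀ n : ℕ, ‖T^[n] x₀‖ ≤ M) :
    ∃ z ∈ K, T z = z ∧ x₀ - z ∈ P :=
  pazy_fixed_point_decreasing_general P hP K hKcl hKco T hTK α hα hT x₀ hx₀ hdec hbdd
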